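/- (Randomized pseudoinverse formula.) Let A be a real m×n matrix, P a real m×p matrix, and Q a real n×q matrix. Then the Moore–Penrose pseudoinverse of A satisfies A⁺ = (PᵀA)⁺ Pᵀ A Q (AQ)⁺ if and only if P and Q preserve the rank of A, that is, rank(PᵀA) = rank(AQ) = rank(A). -/

import Mathlib

/-!
Any `X` with `AXA = A` has `rank X ≥ rank A`, so `rank A⁺ = rank A`. Since `A⁺` factors
through `(PᵀA)⁺` and `(AQ)⁺`, the formula forces
`rank A = rank A⁺ ≤ rank (PᵀA)⁺ = rank (PᵀA) ≤ rank A`, and likewise for `AQ`.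

Conversely, if `rank (AQ) = rank A` then `AQ` and `A` have the same column space, so
`A = AQW` for some `W`. Then `AQ(AQ)⁺` and `AA⁺` are symmetric and each absorbs the other from
the left, hence they are equal. Transposing gives `(PᵀA)⁺PᵀA = A⁺A` when `rank (PᵀA) = rank A`,
and then `A⁺ = A⁺AA⁺ = (A⁺A) Q (AQ)⁺ = (PᵀA)⁺ PᵀA Q (AQ)⁺`.
-/

open Matrix

/-- `G` satisfies the four Penrose equations for `A`, i.e. `G` is the Moore–Penrose
pseudoinverse of `A`. -/
def IsMoorePenrose {m n : ℕ} (A : Matrix (Fin m) (Fin n) ℝ)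
    (G : Matrix (Fin n) (Fin m) ℝ) : Prop :=
  A * G * A = A ∧ G * A * G = G ∧ (A * G)ᵀ = A * G ∧ (G * A)ᵀ = G * A

theorem Matrix.rank_le_of_mul_mul_eq {R m n : Type*} [CommRing R] [StrongRankCondition R]
    [Fintype m] [Fintype n] {M : Matrix m n R} {N : Matrix n m R} (h : M * N * M = M) :
    M.rank ≤ N.rank :=
  calc M.rank = (M * N * M).rank := by rw [h]
    _ ≤ (M * N).rank := rank_mul_le_left _ _
    _ ≤ N.rank := rank_mul_le_right _ _

theorem Matrix.exists_mul_mul_eq_of_rank_mul_eq {K l m n : Type*} [Field K] [Fintype m]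
    [Fintype n] (M : Matrix l m K) (N : Matrix m n K) (h : (M * N).rank = M.rank) :
    ∃ W : Matrix n m K, M * N * W = M := by
  have hrange : LinearMap.range (M * N).mulVecLin = LinearMap.range M.mulVecLin := by
    refine Submodule.eq_of_le_of_finrank_eq ?_ h
    rw [mulVecLin_mul]
    exact LinearMap.range_comp_le_range _ _
  have hcol (j : m) : M.col j ∈ LinearMap.range (M * N).mulVecLin := by
    rw [hrange, range_mulVecLin]
    exact Submodule.subset_span ⟨j, rfl⟩
  choose w hw using hcol
  exact ⟨(of w)ᵀ, ext_col hw⟩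

theorem Matrix.eq_of_transpose_eq_of_mul_eq {R n : Type*} [CommSemiring R] [Fintype n]
    {E F : Matrix n n R} (hE : Eᵀ = E) (hF : Fᵀ = F) (hFE : F * E = E) (hEF : E * F = F) :
    E = F :=
  calc E = (F * E)ᵀ := by rw [hFE, hE]
    _ = F := by rw [transpose_mul, hE, hF, hEF]

namespace IsMoorePenrose

variable {m n : ℕ} {A : Matrix (Fin m) (Fin n) ℝ} {Ap : Matrix (Fin n) (Fin m) ℝ}

theorem rank_eq (h : IsMoorePenrose A Ap) : Ap.rank = A.rank :=
  le_antisymm (rank_le_of_mul_mul_eq h.2.1) (rank_le_of_mul_mul_eq h.1)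

theorem transpose (h : IsMoorePenrose A Ap) : IsMoorePenrose Aᵀ Apᵀ := by
  obtain ⟨h₁, h₂, h₃, h₄⟩ := h
  refine ⟨?_, ?_, ?_, ?_⟩
  · rw [← transpose_mul, ← transpose_mul, ← Matrix.mul_assoc, h₁]
  · rw [← transpose_mul, ← transpose_mul, ← Matrix.mul_assoc, h₂]
  · rw [← transpose_mul, transpose_transpose, h₄]
  · rw [← transpose_mul, transpose_transpose, h₃]

theorem mul_mul_eq_of_rank_mul_eq {q : ℕ} {Q : Matrix (Fin n) (Fin q) ℝ}
    {H : Matrix (Fin q) (Fin m) ℝ} (hAp : IsMoorePenrose A Ap) (hH : IsMoorePenrose (A * Q) H)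
    (hrank : (A * Q).rank = A.rank) :
    A * Q * H = A * Ap := by
  obtain ⟨W, hW⟩ := exists_mul_mul_eq_of_rank_mul_eq A Q hrank
  have hAQHA : A * Q * H * A = A :=
    calc A * Q * H * A = A * Q * H * (A * Q) * W := by rw [Matrix.mul_assoc _ (A * Q) W, hW]
      _ = A := by rw [hH.1, hW]
  refine eq_of_transpose_eq_of_mul_eq hH.2.2.1 hAp.2.2.1 ?_ ?_
  · rw [← Matrix.mul_assoc, ← Matrix.mul_assoc (A * Ap), hAp.1]
  · rw [← Matrix.mul_assoc, hAQHA]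

theorem mul_mul_eq_of_rank_mul_eq' {p : ℕ} {P : Matrix (Fin p) (Fin m) ℝ}
    {G : Matrix (Fin n) (Fin p) ℝ} (hAp : IsMoorePenrose A Ap) (hG : IsMoorePenrose (P * A) G)
    (hrank : (P * A).rank = A.rank) :
    G * (P * A) = Ap * A := by
  have hG' : IsMoorePenrose (Aᵀ * Pᵀ) Gᵀ := by simpa only [transpose_mul] using hG.transpose
  have hrank' : (Aᵀ * Pᵀ).rank = Aᵀ.rank := by
    rw [← transpose_mul, rank_transpose, rank_transpose, hrank]
  simpa only [transpose_mul, transpose_transpose] using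
    congrArg Matrix.transpose (mul_mul_eq_of_rank_mul_eq hAp.transpose hG' hrank')

end IsMoorePenrose

/-- Randomized pseudoinverse formula: `A⁺ = (Pᵀ A)⁺ Pᵀ A Q (A Q)⁺` if and only if
`rank (Pᵀ A) = rank (A Q) = rank A`. -/
theorem randomized_pinv_iff_rank_preserving (m n p q : ℕ)
    (A : Matrix (Fin m) (Fin n) ℝ)
    (P : Matrix (Fin m) (Fin p) ℝ) (Q : Matrix (Fin n) (Fin q) ℝ)
    (Ap : Matrix (Fin n) (Fin m) ℝ)
    (G : Matrix (Fin n) (Fin p) ℝ) (H : Matrix (Fin q) (Fin m) ℝ)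
    (hAp : IsMoorePenrose A Ap)
    (hG : IsMoorePenrose (Pᵀ * A) G) (hH : IsMoorePenrose (A * Q) H) :
    Ap = G * (Pᵀ * A * Q) * H ↔
      ((Pᵀ * A).rank = A.rank ∧ (A * Q).rank = A.rank) := by
  constructor
  · intro hformula
    have hG_le : A.rank ≤ G.rank := by
      rw [← hAp.rank_eq, hformula]
      exact (rank_mul_le_left _ _).trans (rank_mul_le_left _ _)
    have hH_le : A.rank ≤ H.rank := by
      rw [← hAp.rank_eq, hformula]
      exact rank_mul_le_right _ _
    rw [hG.rank_eq] at hG_le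
    rw [hH.rank_eq] at hH_le
    exact ⟨le_antisymm (rank_mul_le_right _ _) hG_le, le_antisymm (rank_mul_le_left _ _) hH_le⟩
  · rintro ⟨hP, hQ⟩
    calc Ap = Ap * (A * Ap) := by rw [← Matrix.mul_assoc, hAp.2.1]
      _ = Ap * A * Q * H := by
        rw [← hAp.mul_mul_eq_of_rank_mul_eq hH hQ]; simp only [Matrix.mul_assoc]
      _ = G * (Pᵀ * A * Q) * H := by
        rw [← hAp.mul_mul_eq_of_rank_mul_eq' hG hP]; simp only [Matrix.mul_assoc]
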